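/- arXiv:1903.07211 — 3 statements merged into one kernel-verified Lean document; each statement's English description precedes it below -/
import Mathlib

section
/- Under the isomorphism ρ between ⋀F_ξ ⊗ ⋀F_ξ* and End_k(⋀F_ξ), the contraction operator (ξ_i*)* ⌟ (−) on the second tensor factor corresponds to the graded commutator [ξ_i ∧ (−), −] on End_k(⋀F_ξ), and the contraction operator ξ_i* ⌟ (−) on the first tensor factor corresponds to the graded commutator [ξ_i* ⌟ (−), −] on End_k(⋀F_ξ). -/
/- Same model as for the previous statements: `⋀ F_ξ` is the free module on subsets
`S ⊆ {1,…,n}` and `⋀ F_ξ ⊗ ⋀ F_ξ^*` the free module on pairs of subsets; the isomorphism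
`ρ : ⋀ F_ξ ⊗ ⋀ F_ξ^* → End_k(⋀ F_ξ)` sends `ξ_A ⊗ ξ̄_B` to `(ξ_A ∧ −) ∘ (ξ_B^* ⌟ −)`.
The graded commutator of an odd operator `D` with a (not necessarily homogeneous) operator
`B` is `D ∘ B − ε ∘ B ∘ ε ∘ D`, where `ε` is the grading involution; for homogeneous `B`
this is `D B − (−1)^{|B|} B D`. -/

noncomputable section
namespace Stmt3

def ksign {n : ℕ} (i : Fin n) (S : Finset (Fin n)) : ℤ :=
  (-1) ^ (S.filter (fun j => j < i)).card

variable (k : Type*) [CommRing k] {n : ℕ}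

def wedgeOp (i : Fin n) : (Finset (Fin n) → k) →ₗ[k] (Finset (Fin n) → k) where
  toFun f S := if i ∈ S then ksign i S • f (S.erase i) else 0
  map_add' f g := by funext S; by_cases h : i ∈ S <;> simp [h, smul_add]
  map_smul' a f := by funext S; by_cases h : i ∈ S <;> simp [h]; ring

def contrOp (i : Fin n) : (Finset (Fin n) → k) →ₗ[k] (Finset (Fin n) → k) where
  toFun f S := if i ∈ S then 0 else ksign i S • f (insert i S)
  map_add' f g := by funext S; by_cases h : i ∈ S <;> simp [h, smul_add]
  map_smul' a f := by funext S; by_cases h : i ∈ S <;> simp [h]; ring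

/-- The grading involution `ε` on `⋀ F_ξ`, acting by `(−1)^{|S|}` on `ξ_S`. -/
def epsOp : Module.End k (Finset (Fin n) → k) where
  toFun f S := ((-1 : ℤ) ^ S.card) • f S
  map_add' f g := by funext S; simp [smul_add]
  map_smul' a f := by funext S; simp; ring

def wedgeMulti (S : Finset (Fin n)) : Module.End k (Finset (Fin n) → k) :=
  ((S.sort (· ≤ ·)).map (wedgeOp k)).prod

def contrMulti (S : Finset (Fin n)) : Module.End k (Finset (Fin n) → k) :=
  ((S.sort (· ≤ ·)).map (contrOp k)).prod

def rhoMap :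
    ((Finset (Fin n) × Finset (Fin n)) → k) →ₗ[k] Module.End k (Finset (Fin n) → k) where
  toFun z := ∑ p : Finset (Fin n) × Finset (Fin n), z p • (wedgeMulti k p.1 * contrMulti k p.2)
  map_add' z w := by simp [add_smul, Finset.sum_add_distrib]
  map_smul' a z := by simp [Finset.smul_sum, smul_smul]

/-- The graded commutator `[D, −]` for an odd operator `D`, extended linearly from homogeneous
operators: `[D, B] = D ∘ B − ε ∘ B ∘ ε ∘ D` where `ε` is the grading involution. -/
def scommOdd (D B : Module.End k (Finset (Fin n) → k)) : Module.End k (Finset (Fin n) → k) :=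
  D * B - epsOp k * B * epsOp k * D

/-- The contraction operator `(ξ_i^*)^* ⌟ (−)` acting on the second tensor factor of
`⋀ F_ξ ⊗ ⋀ F_ξ^*` (with its Koszul sign `(−1)^{|first factor|}`). -/
def sndContr (i : Fin n) (z : (Finset (Fin n) × Finset (Fin n)) → k) :
    (Finset (Fin n) × Finset (Fin n)) → k := fun p =>
  ((-1 : ℤ) ^ p.1.card) •
    (if i ∈ p.2 then 0 else ksign i p.2 • z (p.1, insert i p.2))

/-- The contraction operator `ξ_i^* ⌟ (−)` acting on the first tensor factor of
`⋀ F_ξ ⊗ ⋀ F_ξ^*` (no Koszul sign, being the leftmost factor). -/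
def fstContr (i : Fin n) (z : (Finset (Fin n) × Finset (Fin n)) → k) :
    (Finset (Fin n) × Finset (Fin n)) → k := fun p =>
  if i ∈ p.1 then 0 else ksign i p.1 • z (insert i p.1, p.2)

/-
The graded commutator with an odd operator `D` is a super-derivation,
`[D, X Y] = [D, X] Y + (ε X ε) [D, Y]`, and the operators `ξ_i ∧ −` and `ξ_i^* ⌟ −` satisfy
the canonical anticommutation relations `[ξ_i, ξ_j] = 0`, `[ξ_i^*, ξ_j^*] = 0` and
`[ξ_i, ξ_j^*] = δ_ij`. So on a basis operator `ξ_A ξ_B^*` the commutator with `ξ_i` passes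
through `ξ_A` at the cost of `(−1)^{|A|}` and deletes `ξ_i^*` from the ordered product `ξ_B^*`,
with the sign `ksign i B` of moving it to the front; dually for `ξ_i^*` and `ξ_A`. Reindexing
the resulting sums along `B ↦ B \ {i}` (resp. `A ↦ A \ {i}`) gives the contraction formulas.
-/

theorem _root_.Finset.sum_ite_mem_eq_sum_ite_notMem_insert {α M : Type*} [Fintype α]
    [DecidableEq α] [AddCommMonoid M] (i : α) (f : Finset α → M) :
    ∑ T, (if i ∈ T then f T else 0) = ∑ S, (if i ∈ S then 0 else f (insert i S)) := by
  rw [Finset.sum_ite, Finset.sum_ite, Finset.sum_const_zero, Finset.sum_const_zero, add_zero,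
    zero_add]
  refine (Finset.sum_nbij' (insert i) (·.erase i) ?_ ?_ ?_ ?_ ?_).symm <;>
    simp +contextual [Finset.insert_erase]

theorem neg_one_pow_mul_self {R : Type*} [Monoid R] [HasDistribNeg R] (m : ℕ) :
    (-1 : R) ^ m * (-1) ^ m = 1 := by
  rw [← pow_add, ← two_mul, pow_mul, neg_one_sq, one_pow]

theorem ite_lt_add_ite_lt {ι : Type*} [LinearOrder ι] {i j : ι} (hij : i ≠ j) :
    ((if i < j then -1 else 1) + (if j < i then -1 else 1) : ℤ) = 0 := by
  rcases hij.lt_or_gt with h | h <;> simp [h, h.not_gt]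

def sortedProd {ι M : Type*} [LinearOrder ι] [Monoid M] (f : ι → M) (S : Finset ι) : M :=
  ((S.sort (· ≤ ·)).map f).prod

theorem sortedProd_empty {ι M : Type*} [LinearOrder ι] [Monoid M] (f : ι → M) :
    sortedProd f ∅ = 1 := by
  simp [sortedProd]

theorem sortedProd_insert {ι M : Type*} [LinearOrder ι] [Monoid M] (f : ι → M) {a : ι}
    {S : Finset ι} (h : ∀ x ∈ S, a < x) :
    sortedProd f (insert a S) = f a * sortedProd f S := by
  rw [sortedProd, Finset.sort_insert _ (fun x hx => (h x hx).le) fun ha => (h a ha).false]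
  rfl

section

variable {k}

theorem ksign_mul_self (i : Fin n) (S : Finset (Fin n)) : ksign i S * ksign i S = 1 :=
  neg_one_pow_mul_self _

@[simp] theorem ksign_insert_self (i : Fin n) (S : Finset (Fin n)) :
    ksign i (insert i S) = ksign i S := by
  simp [ksign, Finset.filter_insert]

@[simp] theorem ksign_erase_self (i : Fin n) (S : Finset (Fin n)) :
    ksign i (S.erase i) = ksign i S := by
  simp [ksign, Finset.filter_erase]

theorem ksign_insert {i j : Fin n} {S : Finset (Fin n)} (hj : j ∉ S) :
    ksign i (insert j S) = (if j < i then -1 else 1) * ksign i S := by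
  unfold ksign
  split_ifs with h
  · rw [Finset.filter_insert, if_pos h, Finset.card_insert_of_notMem (by simp [hj]), pow_succ,
      mul_comm]
  · rw [Finset.filter_insert, if_neg h, one_mul]

theorem ksign_erase {i j : Fin n} {S : Finset (Fin n)} (hj : j ∈ S) :
    ksign i (S.erase j) = (if j < i then -1 else 1) * ksign i S := by
  conv_rhs => rw [← Finset.insert_erase hj, ksign_insert (Finset.notMem_erase j S), ← mul_assoc]
  split_ifs <;> simp

theorem ksign_eq_one {i : Fin n} {S : Finset (Fin n)} (h : ∀ x ∈ S, i ≤ x) : ksign i S = 1 := by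
  rw [ksign, Finset.filter_false_of_mem fun x hx => not_lt.2 (h x hx), Finset.card_empty,
    pow_zero]

@[simp] theorem wedgeOp_apply (i : Fin n) (f : Finset (Fin n) → k) (S : Finset (Fin n)) :
    wedgeOp k i f S = if i ∈ S then ksign i S • f (S.erase i) else 0 := rfl

@[simp] theorem contrOp_apply (i : Fin n) (f : Finset (Fin n) → k) (S : Finset (Fin n)) :
    contrOp k i f S = if i ∈ S then 0 else ksign i S • f (insert i S) := rfl

@[simp] theorem epsOp_apply (f : Finset (Fin n) → k) (S : Finset (Fin n)) :
    epsOp k f S = ((-1 : ℤ) ^ S.card) • f S := rfl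

theorem epsOp_mul_epsOp : epsOp k * epsOp k = (1 : Module.End k (Finset (Fin n) → k)) := by
  refine LinearMap.ext fun f => funext fun S => ?_
  simp only [Module.End.mul_apply, epsOp_apply, smul_smul, neg_one_pow_mul_self, one_smul,
    Module.End.one_apply]

-- Phrased with `(-1 : ℤ) •` since `rw` does not match ring lemmas against the `Neg` instance
-- that `-x` picks up on `Module.End k (Finset (Fin n) → k)`.
variable (k) in
def IsOddOp (x : Module.End k (Finset (Fin n) → k)) : Prop :=
  epsOp k * x * epsOp k = (-1 : ℤ) • x

theorem isOddOp_wedgeOp (i : Fin n) : IsOddOp k (wedgeOp k i) := by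
  refine LinearMap.ext fun f => funext fun S => ?_
  by_cases h : i ∈ S
  · simp only [Module.End.mul_apply, epsOp_apply, wedgeOp_apply, if_pos h, LinearMap.smul_apply,
      Pi.smul_apply, smul_smul, ← Finset.card_erase_add_one h]
    rw [pow_succ]
    congr 1
    linear_combination (-ksign i S) * neg_one_pow_mul_self (R := ℤ) (S.erase i).card
  · simp [h]

theorem isOddOp_contrOp (i : Fin n) : IsOddOp k (contrOp k i) := by
  refine LinearMap.ext fun f => funext fun S => ?_
  by_cases h : i ∈ S
  · simp [h]
  · simp only [Module.End.mul_apply, epsOp_apply, contrOp_apply, if_neg h, LinearMap.smul_apply,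
      Pi.smul_apply, smul_smul, Finset.card_insert_of_notMem h]
    rw [pow_succ]
    congr 1
    linear_combination (-ksign i S) * neg_one_pow_mul_self (R := ℤ) S.card

theorem wedgeOp_anticomm (i j : Fin n) :
    wedgeOp k i * wedgeOp k j + wedgeOp k j * wedgeOp k i = 0 := by
  refine LinearMap.ext fun f => funext fun S => ?_
  simp only [LinearMap.add_apply, Module.End.mul_apply, Pi.add_apply, wedgeOp_apply,
    LinearMap.zero_apply, Pi.zero_apply]
  by_cases hij : i = j
  · subst hij; split_ifs <;> simp_all
  by_cases hi : i ∈ S; swap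
  · simp [hi]
  by_cases hj : j ∈ S; swap
  · simp [hj]
  rw [if_pos hi, if_pos hj, if_pos (Finset.mem_erase.2 ⟨Ne.symm hij, hj⟩),
    if_pos (Finset.mem_erase.2 ⟨hij, hi⟩), Finset.erase_right_comm, ksign_erase hi,
    ksign_erase hj, smul_smul, smul_smul, ← add_smul]
  convert zero_smul ℤ _
  linear_combination (ksign i S * ksign j S) * ite_lt_add_ite_lt hij

theorem contrOp_anticomm (i j : Fin n) :
    contrOp k i * contrOp k j + contrOp k j * contrOp k i = 0 := by
  refine LinearMap.ext fun f => funext fun S => ?_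
  simp only [LinearMap.add_apply, Module.End.mul_apply, Pi.add_apply, contrOp_apply,
    LinearMap.zero_apply, Pi.zero_apply]
  by_cases hij : i = j
  · subst hij; split_ifs <;> simp_all
  by_cases hi : i ∈ S
  · simp [hi]
  by_cases hj : j ∈ S
  · simp [hj]
  rw [if_neg hi, if_neg hj, if_neg (by simp [hj, Ne.symm hij] : j ∉ insert i S),
    if_neg (by simp [hi, hij] : i ∉ insert j S), Finset.insert_comm, ksign_insert hi,
    ksign_insert hj, smul_smul, smul_smul, ← add_smul]
  convert zero_smul ℤ _
  linear_combination (ksign i S * ksign j S) * ite_lt_add_ite_lt hij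

theorem wedgeOp_contrOp_anticomm (i j : Fin n) :
    wedgeOp k i * contrOp k j + contrOp k j * wedgeOp k i = if i = j then 1 else 0 := by
  refine LinearMap.ext fun f => funext fun S => ?_
  simp only [LinearMap.add_apply, Module.End.mul_apply, Pi.add_apply, wedgeOp_apply,
    contrOp_apply]
  by_cases hij : i = j
  · subst hij
    rw [if_pos rfl, Module.End.one_apply]
    by_cases hi : i ∈ S
    · rw [if_pos hi, if_pos hi, if_neg (Finset.notMem_erase i S), Finset.insert_erase hi,
        ksign_erase_self, smul_smul, ksign_mul_self, one_smul, add_zero]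
    · rw [if_neg hi, if_neg hi, if_pos (Finset.mem_insert_self i S), Finset.erase_insert hi,
        ksign_insert_self, smul_smul, ksign_mul_self, one_smul, zero_add]
  rw [if_neg hij, LinearMap.zero_apply, Pi.zero_apply]
  by_cases hi : i ∈ S; swap
  · simp [hi, hij]
  by_cases hj : j ∈ S
  · simp [hj, Ne.symm hij]
  rw [if_pos hi, if_neg hj, if_neg (by simp [hj] : j ∉ S.erase i),
    if_pos (by simp [hi] : i ∈ insert j S), Finset.erase_insert_of_ne (Ne.symm hij),
    ksign_erase hi, ksign_insert hj, smul_smul, smul_smul, ← add_smul]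
  convert zero_smul ℤ _
  linear_combination (ksign i S * ksign j S) * ite_lt_add_ite_lt hij

theorem epsOp_conj_mul (X Y : Module.End k (Finset (Fin n) → k)) :
    epsOp k * (X * Y) * epsOp k = epsOp k * X * epsOp k * (epsOp k * Y * epsOp k) := by
  simp only [mul_assoc]
  rw [← mul_assoc (epsOp k) (epsOp k), epsOp_mul_epsOp, one_mul]

theorem scommOdd_of_isOddOp (D : Module.End k (Finset (Fin n) → k))
    {X : Module.End k (Finset (Fin n) → k)} (hX : IsOddOp k X) :
    scommOdd k D X = D * X + X * D := by
  rw [scommOdd, hX, smul_mul_assoc, neg_one_zsmul, sub_neg_eq_add]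

theorem scommOdd_one (D : Module.End k (Finset (Fin n) → k)) : scommOdd k D 1 = 0 := by
  rw [scommOdd, mul_one, mul_one, epsOp_mul_epsOp, one_mul, sub_self]

theorem scommOdd_mul (D X Y : Module.End k (Finset (Fin n) → k)) :
    scommOdd k D (X * Y) =
      scommOdd k D X * Y + epsOp k * X * epsOp k * scommOdd k D Y := by
  simp only [scommOdd]
  rw [epsOp_conj_mul, sub_mul, mul_sub]
  simp only [mul_assoc]
  abel

theorem scommOdd_rhoMap (D : Module.End k (Finset (Fin n) → k))
    (z : (Finset (Fin n) × Finset (Fin n)) → k) :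
    scommOdd k D (rhoMap k z) =
      ∑ p, z p • scommOdd k D (wedgeMulti k p.1 * contrMulti k p.2) := by
  simp only [scommOdd, rhoMap, LinearMap.coe_mk, AddHom.coe_mk, Finset.mul_sum, Finset.sum_mul,
    mul_smul_comm, smul_mul_assoc, smul_sub, Finset.sum_sub_distrib]

theorem epsOp_conj_sortedProd {f : Fin n → Module.End k (Finset (Fin n) → k)}
    (hf : ∀ j, IsOddOp k (f j)) (S : Finset (Fin n)) :
    epsOp k * sortedProd f S * epsOp k = (-1 : ℤ) ^ S.card • sortedProd f S := by
  induction S using Finset.induction_on_min with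
  | empty =>
    rw [sortedProd_empty, mul_one, epsOp_mul_epsOp, Finset.card_empty, pow_zero, one_smul]
  | insert a S ha ih =>
    rw [sortedProd_insert f ha, epsOp_conj_mul, hf, ih, smul_mul_smul_comm,
      Finset.card_insert_of_notMem fun h => (ha a h).false, pow_succ']

theorem scommOdd_sortedProd_eq_zero {D : Module.End k (Finset (Fin n) → k)}
    {f : Fin n → Module.End k (Finset (Fin n) → k)} (hD : ∀ j, scommOdd k D (f j) = 0)
    (S : Finset (Fin n)) : scommOdd k D (sortedProd f S) = 0 := by
  induction S using Finset.induction_on_min with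
  | empty => rw [sortedProd_empty, scommOdd_one]
  | insert a S ha ih =>
    rw [sortedProd_insert f ha, scommOdd_mul, hD, ih, zero_mul, mul_zero, add_zero]

theorem scommOdd_sortedProd {D : Module.End k (Finset (Fin n) → k)}
    {f : Fin n → Module.End k (Finset (Fin n) → k)} (hf : ∀ j, IsOddOp k (f j)) {i : Fin n}
    (hD : ∀ j, scommOdd k D (f j) = if i = j then 1 else 0) (S : Finset (Fin n)) :
    scommOdd k D (sortedProd f S) =
      if i ∈ S then ksign i S • sortedProd f (S.erase i) else 0 := by
  induction S using Finset.induction_on_min with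
  | empty => rw [sortedProd_empty, scommOdd_one, if_neg (Finset.notMem_empty i)]
  | insert a S ha ih =>
    have haS : a ∉ S := fun h => (ha a h).false
    rw [sortedProd_insert f ha, scommOdd_mul, hD, hf, ih]
    by_cases hia : i = a
    · subst hia
      rw [if_pos rfl, if_neg haS, if_pos (Finset.mem_insert_self i S), Finset.erase_insert haS,
        ksign_insert_self, ksign_eq_one fun x hx => (ha x hx).le, one_smul, mul_zero, add_zero,
        one_mul]
    · rw [if_neg hia, zero_mul, zero_add]
      by_cases hiS : i ∈ S
      · rw [if_pos hiS, if_pos (Finset.mem_insert_of_mem hiS), ksign_insert haS,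
          if_pos (ha i hiS), Finset.erase_insert_of_ne (Ne.symm hia),
          sortedProd_insert f fun x hx => ha x (Finset.mem_of_mem_erase hx), smul_mul_smul_comm,
          mul_comm]
      · rw [if_neg hiS, if_neg (by simp [hia, hiS]), mul_zero]

theorem wedgeMulti_eq_sortedProd (A : Finset (Fin n)) :
    wedgeMulti k A = sortedProd (wedgeOp k) A := rfl

theorem contrMulti_eq_sortedProd (B : Finset (Fin n)) :
    contrMulti k B = sortedProd (contrOp k) B := rfl

theorem scommOdd_wedgeOp_wedgeOp (i j : Fin n) :
    scommOdd k (wedgeOp k i) (wedgeOp k j) = 0 := by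
  rw [scommOdd_of_isOddOp _ (isOddOp_wedgeOp j), wedgeOp_anticomm]

theorem scommOdd_contrOp_contrOp (i j : Fin n) :
    scommOdd k (contrOp k i) (contrOp k j) = 0 := by
  rw [scommOdd_of_isOddOp _ (isOddOp_contrOp j), contrOp_anticomm]

theorem scommOdd_wedgeOp_contrOp (i j : Fin n) :
    scommOdd k (wedgeOp k i) (contrOp k j) = if i = j then 1 else 0 := by
  rw [scommOdd_of_isOddOp _ (isOddOp_contrOp j), wedgeOp_contrOp_anticomm]

theorem scommOdd_contrOp_wedgeOp (i j : Fin n) :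
    scommOdd k (contrOp k i) (wedgeOp k j) = if i = j then 1 else 0 := by
  rw [scommOdd_of_isOddOp _ (isOddOp_wedgeOp j), add_comm, wedgeOp_contrOp_anticomm]
  exact if_congr eq_comm rfl rfl

theorem scommOdd_wedgeOp_wedgeMulti_mul_contrMulti (i : Fin n) (A B : Finset (Fin n)) :
    scommOdd k (wedgeOp k i) (wedgeMulti k A * contrMulti k B) =
      if i ∈ B then
        ((-1 : ℤ) ^ A.card * ksign i B) • (wedgeMulti k A * contrMulti k (B.erase i))
      else 0 := by
  simp only [wedgeMulti_eq_sortedProd, contrMulti_eq_sortedProd]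
  rw [scommOdd_mul, scommOdd_sortedProd_eq_zero (scommOdd_wedgeOp_wedgeOp i), zero_mul, zero_add,
    epsOp_conj_sortedProd isOddOp_wedgeOp,
    scommOdd_sortedProd isOddOp_contrOp (scommOdd_wedgeOp_contrOp i)]
  split_ifs
  · rw [smul_mul_smul_comm]
  · rw [mul_zero]

theorem scommOdd_contrOp_wedgeMulti_mul_contrMulti (i : Fin n) (A B : Finset (Fin n)) :
    scommOdd k (contrOp k i) (wedgeMulti k A * contrMulti k B) =
      if i ∈ A then ksign i A • (wedgeMulti k (A.erase i) * contrMulti k B) else 0 := by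
  simp only [wedgeMulti_eq_sortedProd, contrMulti_eq_sortedProd]
  rw [scommOdd_mul, scommOdd_sortedProd isOddOp_wedgeOp (scommOdd_contrOp_wedgeOp i),
    scommOdd_sortedProd_eq_zero (scommOdd_contrOp_contrOp i), mul_zero, add_zero]
  split_ifs
  · rw [smul_mul_assoc]
  · rw [zero_mul]

theorem rhoMap_apply (z : (Finset (Fin n) × Finset (Fin n)) → k) :
    rhoMap k z = ∑ p, z p • (wedgeMulti k p.1 * contrMulti k p.2) := rfl

theorem rhoMap_sndContr (i : Fin n) (z : (Finset (Fin n) × Finset (Fin n)) → k) :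
    rhoMap k (sndContr k i z) = scommOdd k (wedgeOp k i) (rhoMap k z) := by
  rw [scommOdd_rhoMap, rhoMap_apply]
  simp only [scommOdd_wedgeOp_wedgeMulti_mul_contrMulti, smul_ite, smul_zero,
    Fintype.sum_prod_type, Finset.sum_ite_mem_eq_sum_ite_notMem_insert]
  refine Finset.sum_congr rfl fun A _ => Finset.sum_congr rfl fun S _ => ?_
  by_cases h : i ∈ S
  · simp [sndContr, h]
  · rw [sndContr, if_neg h, if_neg h, ksign_insert_self, Finset.erase_insert h, smul_smul,
      smul_assoc, smul_comm]

theorem rhoMap_fstContr (i : Fin n) (z : (Finset (Fin n) × Finset (Fin n)) → k) :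
    rhoMap k (fstContr k i z) = scommOdd k (contrOp k i) (rhoMap k z) := by
  rw [scommOdd_rhoMap, rhoMap_apply]
  simp only [scommOdd_contrOp_wedgeMulti_mul_contrMulti, smul_ite, smul_zero,
    Fintype.sum_prod_type_right, Finset.sum_ite_mem_eq_sum_ite_notMem_insert]
  refine Finset.sum_congr rfl fun B _ => Finset.sum_congr rfl fun S _ => ?_
  by_cases h : i ∈ S
  · simp [fstContr, h]
  · rw [fstContr, if_neg h, if_neg h, ksign_insert_self, Finset.erase_insert h, smul_assoc,
      smul_comm]

end

/-- Under the isomorphism `ρ : ⋀ F_ξ ⊗ ⋀ F_ξ^* ≅ End_k(⋀ F_ξ)`, the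
contraction `(ξ_i^*)^* ⌟ (−)` on the second tensor factor corresponds to the graded commutator
`[ξ_i ∧ (−), −]`, and the contraction `ξ_i^* ⌟ (−)` on the first tensor factor corresponds to
the graded commutator `[ξ_i^* ⌟ (−), −]`. -/
theorem rho_intertwines_contractions_with_commutators
    (i : Fin n) (z : (Finset (Fin n) × Finset (Fin n)) → k) :
    rhoMap k (sndContr k i z) = scommOdd k (wedgeOp k i) (rhoMap k z)
    ∧ rhoMap k (fstContr k i z) = scommOdd k (contrOp k i) (rhoMap k z) :=
  ⟨rhoMap_sndContr i z, rhoMap_fstContr i z⟩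

end Stmt3
end
end

section
/- Let t_1,...,t_n be a quasi-regular sequence in a commutative k-algebra R with I = (t_1,...,t_n). Then any k-linear section σ of the quotient map R → R/I induces an isomorphism of k⟦z_1,...,z_n⟧-modules σ_t: R/I ⊗_k k⟦z_1,...,z_n⟧ → R̂, where R̂ is the I-adic completion and z_i acts on R̂ as multiplication by t_i. Concretely, every element r of R̂ admits a unique representation r = ∑_{M ∈ ℕ^n} σ(r_M) t^M with r_M ∈ R/I. -/
/-!
Since `I` is finitely generated, `I^m R̂` is the kernel of `R̂ → R/I^m`. Writing `r` as the class
of an `I`-adic Cauchy sequence `(f m)` in `R`, an expansion of `r` is therefore a family `c` with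
`f m ≡ ∑_{|M|<m} σ(c_M) t^M` modulo `I^m` for every `m`, and everything happens in `R`.

Existence: if the congruence holds for `m`, the defect `f (m+1) - ∑_{|M|<m} σ(c_M) t^M` lies in
`I^m`, hence equals `∑_{|M|=m} a_M t^M`; taking `c_M = ā_M` in degree `m` corrects it modulo
`I^{m+1}` because `σ(ā_M) ≡ a_M` modulo `I`. Fixing the coefficients degree by degree gives an
expansion.

Uniqueness: if two expansions agree below degree `j`, the degree-`j` form
`∑_{|M|=j} (σ(c_M) - σ(c'_M)) t^M` lies in `I^{j+1}`, so quasi-regularity puts every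
`σ(c_M) - σ(c'_M)` in `I`, i.e. `c_M = c'_M`.
-/

noncomputable section
namespace Stmt5

/-- A sequence `t_1, …, t_n` in a commutative ring `R` is *quasi-regular* if, with
`I = (t_1,…,t_n)`, the canonical map `(R/I)[z_1,…,z_n] → gr_I R` is an isomorphism;
equivalently (the formulation used here, cf. Stacks 10.69): whenever a homogeneous degree-`m`
polynomial expression `∑_{|M|=m} a_M t^M` lies in `I^{m+1}`, all coefficients `a_M` lie in `I`. -/
def IsQuasiRegular {R : Type*} [CommRing R] {n : ℕ} (t : Fin n → R) : Prop :=
  ∀ (m : ℕ) (s : Finset (Fin n → ℕ)) (a : (Fin n → ℕ) → R),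
    (∀ M ∈ s, ∑ i, M i = m) →
    (∑ M ∈ s, a M * ∏ i, t i ^ M i) ∈ (Ideal.span (Set.range t)) ^ (m + 1) →
    ∀ M ∈ s, a M ∈ Ideal.span (Set.range t)

/-- The finite set of multi-indices `M ∈ ℕ^n` with `|M| < m`. -/
def degLT (n m : ℕ) : Finset (Fin n → ℕ) :=
  ((Finset.univ : Finset (Fin n → Fin (m + 1))).image
      (fun M i => (M i : ℕ))).filter (fun M => ∑ i, M i < m)

variable {k R : Type*} [CommRing k] [Algebra ℚ k] [CommRing R] [Algebra k R]
  {n : ℕ} (t : Fin n → R)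

/-- `c : ℕ^n → R/I` is the family of coefficients of a power series representation
`r = ∑_{M ∈ ℕ^n} σ(c_M) t^M` of an element `r` of the `I`-adic completion `R̂`:
for every `m`, the difference between `r` and the partial sum over `|M| < m` lies in
`I^m·R̂`. -/
def IsExpansion (σ : (R ⧸ Ideal.span (Set.range t)) →ₗ[k] R)
    (r : AdicCompletion (Ideal.span (Set.range t)) R)
    (c : (Fin n → ℕ) → R ⧸ Ideal.span (Set.range t)) : Prop :=
  ∀ m : ℕ,
    r - AdicCompletion.of (Ideal.span (Set.range t)) R
        (∑ M ∈ degLT n m, σ (c M) * ∏ i, t i ^ M i)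
      ∈ ((Ideal.span (Set.range t)) ^ m •
          (⊤ : Submodule R (AdicCompletion (Ideal.span (Set.range t)) R)))

open Finset

theorem mem_piAntidiag_univ {ι : Type*} [Fintype ι] [DecidableEq ι] {M : ι → ℕ} {m : ℕ} :
    M ∈ piAntidiag univ m ↔ ∑ i, M i = m := by
  simp

theorem prod_pow_mem_span_range_pow {ι : Type*} [Fintype ι] (t : ι → R) (M : ι → ℕ) :
    ∏ i, t i ^ M i ∈ Ideal.span (Set.range t) ^ ∑ i, M i := by
  rw [← prod_pow_eq_pow_sum]
  exact Ideal.prod_mem_prod fun i _ =>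
    Ideal.pow_mem_pow (Ideal.subset_span (Set.mem_range_self i)) _

theorem prod_pow_mul_eq_prod_pow_add_single {ι : Type*} [Fintype ι] [DecidableEq ι] (t : ι → R)
    (M : ι → ℕ) (i : ι) :
    (∏ j, t j ^ M j) * t i = ∏ j, t j ^ (M + Pi.single i 1 : ι → ℕ) j := by
  simp only [Pi.add_apply, pow_add, prod_mul_distrib, Pi.single_apply, pow_ite, pow_one, pow_zero,
    prod_ite_eq', mem_univ, if_true]

theorem span_range_pow_le_span_monomials {ι : Type*} [Fintype ι] [DecidableEq ι] (t : ι → R)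
    (m : ℕ) :
    Ideal.span (Set.range t) ^ m ≤
      Ideal.span ((fun M : ι → ℕ => ∏ i, t i ^ M i) ''
        ((piAntidiag univ m : Finset (ι → ℕ)) : Set (ι → ℕ))) := by
  induction m with
  | zero =>
    rw [pow_zero, Ideal.one_eq_top, top_le_iff, Ideal.eq_top_iff_one]
    exact Ideal.subset_span ⟨0, by simp, by simp⟩
  | succ m ih =>
    rw [pow_succ]
    refine (Ideal.mul_mono_left ih).trans ?_
    rw [Ideal.span_mul_span', Ideal.span_le]
    rintro _ ⟨_, ⟨M, hM, rfl⟩, _, ⟨i, rfl⟩, rfl⟩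
    refine Ideal.subset_span
      ⟨M + Pi.single i 1, ?_, (prod_pow_mul_eq_prod_pow_add_single t M i).symm⟩
    simp_all [sum_add_distrib]

theorem exists_sum_monomials_eq_of_mem_span_range_pow {ι : Type*} [Fintype ι] [DecidableEq ι]
    (t : ι → R) {m : ℕ} {x : R} (hx : x ∈ Ideal.span (Set.range t) ^ m) :
    ∃ a : (ι → ℕ) → R, ∑ M ∈ piAntidiag univ m, a M * ∏ i, t i ^ M i = x := by
  obtain ⟨l, hl, rfl⟩ := (Finsupp.mem_span_image_iff_linearCombination R).mp
    (span_range_pow_le_span_monomials t m hx)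
  refine ⟨l, ?_⟩
  rw [Finsupp.linearCombination_apply, Finsupp.sum_of_support_subset l
    (coe_subset.mp ((Finsupp.mem_supported R l).mp hl)) (fun M a => a • ∏ i, t i ^ M i)
    (fun _ _ => zero_smul R _)]
  rfl

theorem sub_section_mk_mem {J : Ideal R} {σ : R ⧸ J → R}
    (hσ : ∀ x, Ideal.Quotient.mk J (σ x) = x) (a : R) : a - σ (Ideal.Quotient.mk J a) ∈ J :=
  Ideal.Quotient.eq.mp (hσ _).symm

theorem mk_sub_of_mem_pow_smul_top_iff {I : Ideal R} {N : Type*} [AddCommGroup N] [Module R N]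
    (hI : I.FG) (f : AdicCompletion.AdicCauchySequence I N) (x : N) (m : ℕ) :
    AdicCompletion.mk I N f - AdicCompletion.of I N x ∈
        (I ^ m • ⊤ : Submodule R (AdicCompletion I N)) ↔
      f m - x ∈ (I ^ m • ⊤ : Submodule R N) := by
  rw [AdicCompletion.pow_smul_top_eq_ker_eval hI, LinearMap.mem_ker, map_sub,
    AdicCompletion.eval_of, AdicCompletion.eval_apply, AdicCompletion.mk_apply_coe, ← map_sub,
    Submodule.mkQ_apply, Submodule.Quotient.mk_eq_zero]

theorem adicCauchySequence_sub_succ_mem {I : Ideal R} (f : AdicCompletion.AdicCauchySequence I R)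
    (m : ℕ) :
    f m - f (m + 1) ∈ I ^ m := by
  simpa only [SModEq.sub_mem, smul_eq_mul, Ideal.mul_top] using
    (AdicCompletion.isAdicCauchy_iff I R f).mp f.2 m

theorem exists_forall_of_exists_extend {α β : Type*} (deg : α → ℕ) (P : ℕ → (α → β) → Prop)
    (hP : ∀ m c c', (∀ a, deg a < m → c a = c' a) → P m c → P m c')
    (h₀ : ∃ c, P 0 c)
    (hstep : ∀ m c, P m c → ∃ c', (∀ a, deg a < m → c' a = c a) ∧ P (m + 1) c') :
    ∃ c, ∀ m, P m c := by
  obtain ⟨c₀, hc₀⟩ := h₀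
  choose F hFagree hFP using hstep
  let seq : ∀ m, {c // P m c} :=
    fun m => Nat.rec ⟨c₀, hc₀⟩ (fun m s => ⟨F m s.1 s.2, hFP m s.1 s.2⟩) m
  have hseq : ∀ m j a, deg a < m → (seq (m + j)).1 a = (seq m).1 a := by
    intro m j a ha
    induction j with
    | zero => rfl
    | succ j ih => exact (hFagree _ _ _ a (ha.trans_le (Nat.le_add_right m j))).trans ih
  refine ⟨fun a => (seq (deg a + 1)).1 a, fun m => hP m (seq m).1 _ (fun a ha => ?_) (seq m).2⟩
  obtain ⟨j, rfl⟩ := Nat.exists_eq_add_of_le ha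
  exact hseq _ j a (Nat.lt_succ_self _)

def truncSum (a : (Fin n → ℕ) → R) (m : ℕ) : R :=
  ∑ M ∈ degLT n m, a M * ∏ i, t i ^ M i

theorem mem_degLT {m : ℕ} {M : Fin n → ℕ} : M ∈ degLT n m ↔ ∑ i, M i < m := by
  rw [degLT, mem_filter, mem_image]
  refine ⟨fun h => h.2, fun h => ⟨⟨fun i => ⟨M i, ?_⟩, mem_univ _, rfl⟩, h⟩⟩
  have := single_le_sum (fun j _ => Nat.zero_le (M j)) (mem_univ i)
  omega

theorem truncSum_succ (a : (Fin n → ℕ) → R) (m : ℕ) :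
    truncSum t a (m + 1) = truncSum t a m + ∑ M ∈ piAntidiag univ m, a M * ∏ i, t i ^ M i := by
  have hsplit : degLT n (m + 1) = degLT n m ∪ piAntidiag univ m := by
    ext M
    simp only [mem_union, mem_degLT, mem_piAntidiag_univ]
    omega
  have hdisj : Disjoint (degLT n m) (piAntidiag univ m) := disjoint_left.mpr fun M h h' => by
    rw [mem_degLT] at h
    rw [mem_piAntidiag_univ] at h'
    omega
  rw [truncSum, hsplit, sum_union hdisj, truncSum]

theorem truncSum_congr {a b : (Fin n → ℕ) → R} {m : ℕ} (h : ∀ M, ∑ i, M i < m → a M = b M) :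
    truncSum t a m = truncSum t b m :=
  sum_congr rfl fun M hM => by rw [h M (mem_degLT.mp hM)]

theorem exists_sub_truncSum_succ_mem {σ : R ⧸ Ideal.span (Set.range t) → R}
    (hσ : ∀ x, Ideal.Quotient.mk _ (σ x) = x) {x : R} {m : ℕ}
    {c : (Fin n → ℕ) → R ⧸ Ideal.span (Set.range t)}
    (hc : x - truncSum t (fun M => σ (c M)) m ∈ Ideal.span (Set.range t) ^ m) :
    ∃ c' : (Fin n → ℕ) → R ⧸ Ideal.span (Set.range t), (∀ M, ∑ i, M i < m → c' M = c M) ∧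
      x - truncSum t (fun M => σ (c' M)) (m + 1) ∈ Ideal.span (Set.range t) ^ (m + 1) := by
  obtain ⟨a, ha⟩ := exists_sum_monomials_eq_of_mem_span_range_pow t hc
  let c' M := if ∑ i, M i < m then c M else Ideal.Quotient.mk _ (a M)
  have hlow : ∀ M, ∑ i, M i < m → c' M = c M := fun M hM => if_pos hM
  refine ⟨c', hlow, ?_⟩
  rw [truncSum_succ, truncSum_congr t (fun M hM => congrArg σ (hlow M hM)), ← sub_sub, ← ha,
    ← sum_sub_distrib]
  refine sum_mem fun M hM => ?_
  have hdeg : ∑ i, M i = m := mem_piAntidiag_univ.mp hM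
  have hc' : c' M = Ideal.Quotient.mk _ (a M) := if_neg hdeg.not_lt
  rw [hc', ← sub_mul, pow_succ']
  exact Ideal.mul_mem_mul (sub_section_mk_mem hσ _) (hdeg ▸ prod_pow_mem_span_range_pow t M)

theorem exists_forall_sub_truncSum_mem {σ : R ⧸ Ideal.span (Set.range t) → R}
    (hσ : ∀ x, Ideal.Quotient.mk _ (σ x) = x) {f : ℕ → R}
    (hf : ∀ m, f m - f (m + 1) ∈ Ideal.span (Set.range t) ^ m) :
    ∃ c : (Fin n → ℕ) → R ⧸ Ideal.span (Set.range t),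
      ∀ m, f m - truncSum t (fun M => σ (c M)) m ∈ Ideal.span (Set.range t) ^ m := by
  refine exists_forall_of_exists_extend (fun M => ∑ i, M i) _ (fun m c c' h hc => ?_)
    ⟨0, by simp⟩ (fun m c hc => exists_sub_truncSum_succ_mem t hσ ?_)
  · rwa [← truncSum_congr t fun M hM => congrArg σ (h M hM)]
  · simpa only [sub_sub_sub_cancel_left] using sub_mem hc (hf m)

theorem coeff_eq_of_truncSum_sub_mem (hqr : IsQuasiRegular t)
    {σ : R ⧸ Ideal.span (Set.range t) → R} (hσ : ∀ x, Ideal.Quotient.mk _ (σ x) = x)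
    {c c' : (Fin n → ℕ) → R ⧸ Ideal.span (Set.range t)} {j : ℕ}
    (hlow : ∀ M, ∑ i, M i < j → c M = c' M)
    (h : truncSum t (fun M => σ (c M)) (j + 1) - truncSum t (fun M => σ (c' M)) (j + 1) ∈
      Ideal.span (Set.range t) ^ (j + 1))
    {M : Fin n → ℕ} (hM : ∑ i, M i = j) : c M = c' M := by
  rw [truncSum_succ, truncSum_succ, truncSum_congr t (fun M hM => congrArg σ (hlow M hM)),
    add_sub_add_left_eq_sub, ← sum_sub_distrib] at h
  simp_rw [← sub_mul] at h
  rw [← hσ (c M), ← hσ (c' M)]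
  exact Ideal.Quotient.eq.mpr
    (hqr j _ _ (fun _ => mem_piAntidiag_univ.mp) h M (mem_piAntidiag_univ.mpr hM))

theorem eq_of_forall_sub_truncSum_mem (hqr : IsQuasiRegular t)
    {σ : R ⧸ Ideal.span (Set.range t) → R} (hσ : ∀ x, Ideal.Quotient.mk _ (σ x) = x)
    {f : ℕ → R} {c c' : (Fin n → ℕ) → R ⧸ Ideal.span (Set.range t)}
    (hc : ∀ m, f m - truncSum t (fun M => σ (c M)) m ∈ Ideal.span (Set.range t) ^ m)
    (hc' : ∀ m, f m - truncSum t (fun M => σ (c' M)) m ∈ Ideal.span (Set.range t) ^ m) :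
    c = c' := by
  suffices h : ∀ j M, ∑ i, M i < j → c M = c' M from funext fun M => h _ M (Nat.lt_succ_self _)
  intro j
  induction j with
  | zero => exact fun M hM => absurd hM (Nat.not_lt_zero _)
  | succ j ih =>
    intro M hM
    rcases Nat.lt_succ_iff_lt_or_eq.mp hM with hlt | heq
    · exact ih M hlt
    · refine coeff_eq_of_truncSum_sub_mem t hqr hσ ih ?_ heq
      simpa only [sub_sub_sub_cancel_left] using sub_mem (hc' (j + 1)) (hc (j + 1))

theorem isExpansion_mk_iff {k : Type*} [CommRing k] [Algebra k R]
    (σ : (R ⧸ Ideal.span (Set.range t)) →ₗ[k] R)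
    (f : AdicCompletion.AdicCauchySequence (Ideal.span (Set.range t)) R)
    (c : (Fin n → ℕ) → R ⧸ Ideal.span (Set.range t)) :
    IsExpansion t σ (AdicCompletion.mk _ R f) c ↔
      ∀ m, f m - truncSum t (fun M => σ (c M)) m ∈ Ideal.span (Set.range t) ^ m :=
  forall_congr' fun m => by
    rw [mk_sub_of_mem_pow_smul_top_iff (Submodule.fg_span (Set.finite_range t)), smul_eq_mul,
      Ideal.mul_top]
    rfl

/-- Let `t_1,…,t_n` be a quasi-regular sequence in a commutative `k`-algebra
`R`, `I = (t_1,…,t_n)`, and let `σ : R/I → R` be any `k`-linear section of the quotient map.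
Then every element `r` of the `I`-adic completion `R̂` admits a *unique* representation
`r = ∑_{M ∈ ℕ^n} σ(r_M) t^M` with coefficients `r_M ∈ R/I`; equivalently, `σ` induces an
isomorphism of `k⟦z_1,…,z_n⟧`-modules `R/I ⊗_k k⟦z_1,…,z_n⟧ ≅ R̂`. -/
theorem unique_power_series_representation
    (hqr : IsQuasiRegular t)
    (σ : (R ⧸ Ideal.span (Set.range t)) →ₗ[k] R)
    (hσ : ∀ x, Ideal.Quotient.mk (Ideal.span (Set.range t)) (σ x) = x)
    (r : AdicCompletion (Ideal.span (Set.range t)) R) :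
    ∃! c : (Fin n → ℕ) → R ⧸ Ideal.span (Set.range t), IsExpansion t σ r c := by
  obtain ⟨f, rfl⟩ := AdicCompletion.mk_surjective _ R r
  simp only [isExpansion_mk_iff]
  obtain ⟨c, hc⟩ := exists_forall_sub_truncSum_mem t hσ (adicCauchySequence_sub_succ_mem f)
  exact ⟨c, hc, fun c' hc' => eq_of_forall_sub_truncSum_mem t hqr hσ hc' hc⟩

end Stmt5
end
end

section
/- Composition of Hom-spaces under ν is computed by contraction-and-projection: the composition map Hom_k(⋀F_η, ⋀F_ε) ⊗ Hom_k(⋀F_ξ, ⋀F_η) → Hom_k(⋀F_ξ, ⋀F_ε) corresponds, under ν ⊗ ν on the source and ν on the target, to the map P ∘ exp(∑_i η_i* ⊗ η̄_i*) from (⋀F_ε ⊗ ⋀F_η*) ⊗ (⋀F_η ⊗ ⋀F_ξ*) to ⋀F_ε ⊗ ⋀F_ξ*, where the operator η_i* contracts in the ⋀F_η* factor, η̄_i* contracts in the ⋀F_η factor, and P is the projection onto the subspace with no η's or η̄'s. -/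
/-! Expanding `ψ(ξ_S)` in the monomial basis of `⋀F_η` writes `ν(φ ∘ ψ)_{T,S}` as
`∑_E (-1)^{C(|E|,2)} ν(φ)_{T,E} ν(ψ)_{E,S}`, the sign undoing the one `ν(φ)` attaches to `η_E`.
At a diagonal index `(A, A)` the coupling operator inserts one new `η_i` into both middle slots,
with sign `(-1)^{|A|}`; so its `m`-th power reaches each `E` with `|E| = m` from `(∅, ∅)` along
`m!` insertion orders, all with sign `(-1)^{C(m,2)}`, and the `1/m!` of the exponential cancels
the count. -/

noncomputable section
namespace Stmt15

/- `⋀F_ξ, ⋀F_η, ⋀F_ε` (free odd generators `ξ_1..ξ_r`, `η_1..η_s`, `ε_1..ε_t`) are modelled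
as the free `k`-modules on subsets, and `(⋀F_ε ⊗ ⋀F_η^*) ⊗ (⋀F_η ⊗ ⋀F_ξ^*)` as the free
`k`-module on quadruples of subsets.  The isomorphism `ν` and the coupling operator
`∑_i η_i^* ⊗ η̄_i^*` (removing an `η̄_i` from the `⋀F_η^*` factor and an `η_i` from the
`⋀F_η` factor, with Koszul signs) are as in the paper. -/

def ksign {n : ℕ} (i : Fin n) (S : Finset (Fin n)) : ℤ :=
  (-1) ^ (S.filter (fun j => j < i)).card

variable (k : Type*) [CommRing k] [Algebra ℚ k] {r s t : ℕ}

/-- `ν : Hom_k(⋀F, ⋀G) → ⋀G ⊗ ⋀F^*`,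
`ν(φ) = ∑_{p≥0} ∑_{i_1<⋯<i_p} (−1)^{p(p−1)/2} φ(f_{i_1}⋯f_{i_p}) ⊗ f_{i_1}^*∧⋯∧f_{i_p}^*`. -/
def nuG {a b : ℕ} (φ : (Finset (Fin a) → k) →ₗ[k] (Finset (Fin b) → k)) :
    (Finset (Fin b) × Finset (Fin a)) → k := fun p =>
  ((-1 : ℤ) ^ Nat.choose p.2.card 2) • φ (Pi.single p.2 1) p.1

/-- The index type of the monomial basis of `(⋀F_ε ⊗ ⋀F_η^*) ⊗ (⋀F_η ⊗ ⋀F_ξ^*)`. -/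
abbrev BigIndex (r s t : ℕ) :=
  (Finset (Fin t) × Finset (Fin s)) × (Finset (Fin s) × Finset (Fin r))

/-- The summand `η_i^* ⊗ η̄_i^*` of the coupling operator: it removes `η̄_i` from the
`⋀F_η^*` factor and `η_i` from the `⋀F_η` factor, with the appropriate Koszul signs. -/
def couplingOp (i : Fin s) : Module.End k (BigIndex r s t → k) where
  toFun w p :=
    if i ∈ p.1.2 ∨ i ∈ p.2.1 then 0
    else (((-1 : ℤ) ^ p.1.2.card) * ksign i p.1.2 * ksign i p.2.1) •
      w ((p.1.1, insert i p.1.2), (insert i p.2.1, p.2.2))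
  map_add' f g := by funext p; by_cases h : i ∈ p.1.2 ∨ i ∈ p.2.1 <;> simp [h, smul_add]
  map_smul' a f := by funext p; by_cases h : i ∈ p.1.2 ∨ i ∈ p.2.1 <;> simp [h]; ring

/-- The exponential `exp(∑_i η_i^* ⊗ η̄_i^*)` (a finite sum, the operator being nilpotent:
`(∑_i η_i^* ⊗ η̄_i^*)^m = 0` for `m > s`). -/
def expCoupling : Module.End k (BigIndex r s t → k) :=
  ∑ m ∈ Finset.range (s + 1),
    algebraMap ℚ k (1 / (Nat.factorial m : ℚ)) • (∑ i, couplingOp k i) ^ m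

open Finset

theorem _root_.Finset.sum_powersetCard_erase_insert {α M : Type*} [DecidableEq α]
    [AddCommMonoid M] {U : Finset α} {i : α} (hi : i ∈ U) (m : ℕ) (f : Finset α → M) :
    ∑ E ∈ powersetCard m (U.erase i), f (insert i E) =
      ∑ F ∈ powersetCard (m + 1) U with i ∈ F, f F := by
  refine sum_nbij' (insert i) (·.erase i) ?_ ?_ ?_ ?_ (fun _ _ => rfl)
  · intro E hE
    simp only [mem_filter, mem_powersetCard] at hE ⊢
    have hiE : i ∉ E := fun h => notMem_erase i U (hE.1 h)
    refine ⟨⟨insert_subset hi (hE.1.trans (erase_subset i U)), ?_⟩, mem_insert_self i E⟩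
    rw [card_insert_of_notMem hiE, hE.2]
  · intro F hF
    simp only [mem_filter, mem_powersetCard] at hF ⊢
    exact ⟨erase_subset_erase i hF.1.1, by rw [card_erase_of_mem hF.2, hF.1.2]; rfl⟩
  · intro E hE
    rw [mem_powersetCard] at hE
    exact erase_insert fun h => notMem_erase i U (hE.1 h)
  · intro F hF
    rw [mem_filter] at hF
    exact insert_erase hF.2

theorem _root_.Finset.sum_sum_powersetCard_erase_insert {α M : Type*} [DecidableEq α]
    [AddCommMonoid M] (U : Finset α) (m : ℕ) (f : Finset α → M) :
    ∑ i ∈ U, ∑ E ∈ powersetCard m (U.erase i), f (insert i E) =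
      (m + 1) • ∑ F ∈ powersetCard (m + 1) U, f F := by
  calc ∑ i ∈ U, ∑ E ∈ powersetCard m (U.erase i), f (insert i E)
      = ∑ i ∈ U, ∑ F ∈ powersetCard (m + 1) U with i ∈ F, f F :=
        sum_congr rfl fun i hi => sum_powersetCard_erase_insert hi m f
    _ = ∑ F ∈ powersetCard (m + 1) U, ∑ _i ∈ F, f F :=
        sum_comm' fun i F => by
          simp only [mem_filter, mem_powersetCard]
          exact ⟨fun h => ⟨h.2.2, h.2.1⟩, fun h => ⟨h.2.1 h.1, h.2, h.1⟩⟩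
    _ = (m + 1) • ∑ F ∈ powersetCard (m + 1) U, f F := by
        rw [smul_sum]
        exact sum_congr rfl fun F hF => by rw [sum_const, (mem_powersetCard.mp hF).2]

section

omit [Algebra ℚ k]
variable {k}

theorem nuG_comp {a b c : ℕ} (φ : (Finset (Fin b) → k) →ₗ[k] (Finset (Fin c) → k))
    (ψ : (Finset (Fin a) → k) →ₗ[k] (Finset (Fin b) → k))
    (T : Finset (Fin c)) (S : Finset (Fin a)) :
    nuG k (φ ∘ₗ ψ) (T, S) =
      ∑ E, ((-1 : ℤ) ^ (#E).choose 2) • (nuG k φ (T, E) * nuG k ψ (E, S)) := by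
  have expand : ψ (Pi.single S 1) = ∑ E, ψ (Pi.single S 1) E • Pi.single E 1 := by
    conv_lhs => rw [← univ_sum_single (ψ (Pi.single S 1))]
    simp only [← Pi.single_smul, smul_eq_mul, mul_one]
  rw [nuG, LinearMap.comp_apply, expand, map_sum, Finset.sum_apply, smul_sum]
  refine sum_congr rfl fun E _ => ?_
  have sign_sq : ((-1 : k) ^ (#E).choose 2) * (-1) ^ (#E).choose 2 = 1 :=
    pow_mul_pow_eq_one _ (by norm_num)
  simp only [nuG, map_smul, Pi.smul_apply, smul_eq_mul, zsmul_eq_mul]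
  push_cast
  linear_combination (-((-1 : k) ^ (#S).choose 2 * ψ (Pi.single S 1) E * φ (Pi.single E 1) T)) *
    sign_sq

theorem ksign_mul_self (i : Fin s) (A : Finset (Fin s)) : ksign i A * ksign i A = 1 :=
  pow_mul_pow_eq_one _ rfl

variable (w : BigIndex r s t → k) (T : Finset (Fin t)) (S : Finset (Fin r))

theorem couplingOp_apply_diag_of_mem {i : Fin s} {A : Finset (Fin s)} (hi : i ∈ A) :
    couplingOp k i w ((T, A), (A, S)) = 0 :=
  if_pos (Or.inl hi)

theorem couplingOp_apply_diag_of_notMem {i : Fin s} {A : Finset (Fin s)} (hi : i ∉ A) :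
    couplingOp k i w ((T, A), (A, S)) =
      ((-1 : ℤ) ^ #A) • w ((T, insert i A), (insert i A, S)) := by
  show (if i ∈ A ∨ i ∈ A then (0 : k) else
    ((-1 : ℤ) ^ #A * ksign i A * ksign i A) • w ((T, insert i A), (insert i A, S))) = _
  rw [if_neg (by simp [hi]), mul_assoc, ksign_mul_self, mul_one]

theorem sum_couplingOp_apply_diag (A : Finset (Fin s)) :
    (∑ i, couplingOp k i) w ((T, A), (A, S)) =
      ((-1 : ℤ) ^ #A) • ∑ i ∈ Aᶜ, w ((T, insert i A), (insert i A, S)) := by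
  rw [LinearMap.sum_apply, Finset.sum_apply, ← sum_compl_add_sum A,
    sum_eq_zero fun i hi => couplingOp_apply_diag_of_mem w T S hi, add_zero, smul_sum]
  exact sum_congr rfl fun i hi => couplingOp_apply_diag_of_notMem w T S (mem_compl.mp hi)

theorem sum_couplingOp_pow_apply_diag (m : ℕ) (A : Finset (Fin s)) :
    ((∑ i, couplingOp k i) ^ m) w ((T, A), (A, S)) =
      ((m.factorial : ℤ) * (-1) ^ (#A * m + m.choose 2)) •
        ∑ E ∈ powersetCard m Aᶜ, w ((T, A ∪ E), (A ∪ E, S)) := by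
  induction m generalizing A with
  | zero => simp
  | succ m ih =>
    have step : ∀ i ∈ Aᶜ, ((∑ i, couplingOp k i) ^ m) w ((T, insert i A), (insert i A, S)) =
        ((m.factorial : ℤ) * (-1) ^ ((#A + 1) * m + m.choose 2)) •
          ∑ E ∈ powersetCard m (Aᶜ.erase i), w ((T, A ∪ insert i E), (A ∪ insert i E, S)) := by
      intro i hi
      rw [ih, card_insert_of_notMem (mem_compl.mp hi), compl_insert]
      simp only [insert_union, union_insert]
    rw [pow_succ', Module.End.mul_apply, sum_couplingOp_apply_diag, sum_congr rfl step,
      ← smul_sum, sum_sum_powersetCard_erase_insert _ _ fun E => w ((T, A ∪ E), (A ∪ E, S)),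
      ← natCast_zsmul, smul_smul, smul_smul,
      Nat.choose_succ_succ', Nat.choose_one_right, Nat.factorial_succ]
    congr 1
    push_cast
    ring

end

theorem expCoupling_apply_diag_empty (w : BigIndex r s t → k) (T : Finset (Fin t))
    (S : Finset (Fin r)) :
    expCoupling k w ((T, ∅), (∅, S)) =
      ∑ E : Finset (Fin s), ((-1 : ℤ) ^ (#E).choose 2) • w ((T, E), (E, S)) := by
  have term : ∀ m : ℕ,
      (algebraMap ℚ k (1 / (m.factorial : ℚ)) • (∑ i, couplingOp k i) ^ m) w ((T, ∅), (∅, S)) =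
        ∑ E ∈ powersetCard m univ, ((-1 : ℤ) ^ (#E).choose 2) • w ((T, E), (E, S)) := by
    intro m
    have hfac : algebraMap ℚ k (1 / (m.factorial : ℚ)) * (m.factorial : k) = 1 := by
      rw [← map_natCast (algebraMap ℚ k), ← map_mul, one_div,
        inv_mul_cancel₀ (by exact_mod_cast m.factorial_ne_zero), map_one]
    rw [LinearMap.smul_apply, Pi.smul_apply, sum_couplingOp_pow_apply_diag, smul_sum, smul_sum]
    refine sum_congr rfl fun E hE => ?_
    rw [(mem_powersetCard.mp hE).2]
    simp only [card_empty, zero_mul, zero_add, empty_union, zsmul_eq_mul, smul_eq_mul]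
    push_cast
    linear_combination ((-1 : k) ^ m.choose 2 * w ((T, E), (E, S))) * hfac
  rw [expCoupling, LinearMap.sum_apply, Finset.sum_apply, sum_congr rfl fun m _ => term m,
    ← powerset_univ, sum_powerset, card_univ, Fintype.card_fin]

/-- Composition of Hom-spaces corresponds, under `ν ⊗ ν` on the source and
`ν` on the target, to `P ∘ exp(∑_i η_i^* ⊗ η̄_i^*)`, where `P` is the projection onto the
subspace with no `η`'s or `η̄`'s (i.e. evaluation of the coefficient function at pairs whose
`η`- and `η̄`-components are empty). -/
theorem nu_of_composition (φ : (Finset (Fin s) → k) →ₗ[k] (Finset (Fin t) → k))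
    (ψ : (Finset (Fin r) → k) →ₗ[k] (Finset (Fin s) → k))
    (T : Finset (Fin t)) (S : Finset (Fin r)) :
    nuG k (φ ∘ₗ ψ) (T, S) =
      expCoupling k (fun p : BigIndex r s t => nuG k φ p.1 * nuG k ψ p.2)
        ((T, ∅), (∅, S)) := by
  rw [nuG_comp, expCoupling_apply_diag_empty]

end Stmt15
end
end
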